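/- arXiv:0905.4054 — 7 statements merged into one kernel-verified Lean document; each statement's English description precedes it below -/
import Mathlib

section
/- Let c^i_{jk} be smooth structure functions on an open set U ⊆ ℝ^n, symmetric in (j,k) and associative, and let Γ^i_{jk} be a torsionless connection satisfying the symmetry condition ∇_l c^i_{jk} = ∇_j c^i_{lk}. If a smooth vector field X satisfies c^i_{jm} ∇_k X^m = c^i_{km} ∇_j X^m for all i,j,k, then its components are annihilated by the cyclic curvature operator: (R^k_{lmi} c^n_{pk} + R^k_{lip} c^n_{mk} + R^k_{lpm} c^n_{ik}) X^l = 0 for all indices n,p,m,i. -/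
open scoped BigOperators

noncomputable section

/-- Vector fields on (an open subset of) `ℝⁿ`, given by their components. -/
abbrev VF (n : ℕ) := Fin n → (Fin n → ℝ) → ℝ

/-- Structure functions `c^i_{jk}` (and also Christoffel symbols `Γ^i_{jk}`). -/
abbrev SC (n : ℕ) := Fin n → Fin n → Fin n → (Fin n → ℝ) → ℝ

/-- Partial derivative `∂_j f` at `x`. -/
def pd {n : ℕ} (f : (Fin n → ℝ) → ℝ) (j : Fin n) (x : Fin n → ℝ) : ℝ :=
  fderiv ℝ f x (Pi.single j 1)

/-- Covariant derivative of a vector field: `∇_j X^i = ∂_j X^i + Γ^i_{jk} X^k`. -/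
def nablaV {n : ℕ} (Γ : SC n) (X : VF n) (j i : Fin n) (x : Fin n → ℝ) : ℝ :=
  pd (X i) j x + ∑ k, Γ i j k x * X k x

/-- Covariant derivative of the structure functions:
`∇_l c^i_{jk} = ∂_l c^i_{jk} + Γ^i_{ls} c^s_{jk} − Γ^s_{lj} c^i_{sk} − Γ^s_{lk} c^i_{js}`. -/
def nablaC {n : ℕ} (Γ c : SC n) (l i j k : Fin n) (x : Fin n → ℝ) : ℝ :=
  pd (c i j k) l x + ∑ s, (Γ i l s x * c s j k x - Γ s l j x * c i s k x - Γ s l k x * c i j s x)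

/-- Curvature tensor `R^i_{lmp} = ∂_m Γ^i_{pl} − ∂_p Γ^i_{ml} + Γ^i_{ms} Γ^s_{pl} − Γ^i_{ps} Γ^s_{ml}`. -/
def Riem {n : ℕ} (Γ : SC n) (i l m p : Fin n) (x : Fin n → ℝ) : ℝ :=
  pd (Γ i p l) m x - pd (Γ i m l) p x
    + ∑ s, (Γ i m s x * Γ s p l x - Γ i p s x * Γ s m l x)


namespace Statement11Helpers
variable {n : ℕ} {f g : (Fin n → ℝ) → ℝ} {x : Fin n → ℝ} {j l : Fin n}

lemma pd_congr (h : f =ᶠ[nhds x] g) : pd f j x = pd g j x := by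
  unfold pd; rw [h.fderiv_eq]

lemma pd_add (hf : DifferentiableAt ℝ f x) (hg : DifferentiableAt ℝ g x) :
    pd (fun y => f y + g y) j x = pd f j x + pd g j x := by
  unfold pd; rw [fderiv_fun_add hf hg]; rfl

lemma pd_mul (hf : DifferentiableAt ℝ f x) (hg : DifferentiableAt ℝ g x) :
    pd (fun y => f y * g y) j x = pd f j x * g x + f x * pd g j x := by
  unfold pd; rw [fderiv_fun_mul hf hg]; simp; ring

lemma pd_sum {ι : Type} (s : Finset ι) (F : ι → (Fin n → ℝ) → ℝ)
    (h : ∀ i ∈ s, DifferentiableAt ℝ (F i) x) :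
    pd (fun y => ∑ i ∈ s, F i y) j x = ∑ i ∈ s, pd (F i) j x := by
  unfold pd; rw [fderiv_fun_sum h]; simp

lemma contDiffAt_pd (hf : ContDiffAt ℝ (⊤ : ℕ∞) f x) : ContDiffAt ℝ (⊤ : ℕ∞) (pd f j) x := by
  have h1 : ContDiffAt ℝ (⊤ : ℕ∞) (fderiv ℝ f) x := hf.fderiv_right (by simp)
  exact ((ContinuousLinearMap.apply ℝ ℝ (Pi.single j 1 : Fin n → ℝ)).contDiff.contDiffAt).comp x h1

lemma pd_comm (hf : ContDiffAt ℝ (⊤ : ℕ∞) f x) : pd (pd f j) l x = pd (pd f l) j x := by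
  have h1 : DifferentiableAt ℝ (fderiv ℝ f) x := (hf.fderiv_right (m := 1) (WithTop.coe_le_coe.mpr le_top)).differentiableAt one_ne_zero
  have hsymm := hf.isSymmSndFDerivAt (by rw [minSmoothness_of_isRCLikeNormedField]; exact WithTop.coe_le_coe.mpr le_top)
  have e : ∀ v w : Fin n → ℝ, fderiv ℝ (fun y => fderiv ℝ f y v) x w
      = fderiv ℝ (fderiv ℝ f) x w v := by
    intro v w
    rw [fderiv_clm_apply h1 (differentiableAt_const v)]
    simp
  show fderiv ℝ (fun y => fderiv ℝ f y (Pi.single j 1)) x (Pi.single l 1) = _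
  rw [e, hsymm]
  show _ = fderiv ℝ (fun y => fderiv ℝ f y (Pi.single l 1)) x (Pi.single j 1)
  rw [e]

end Statement11Helpers

namespace Statement11

/-- Second covariant derivative values of `X` (as pure data). -/
def Wf {n : ℕ} (Gv : Fin n → Fin n → Fin n → ℝ) (Zv : Fin n → Fin n → ℝ)
    (dZ : Fin n → Fin n → Fin n → ℝ) (l k a : Fin n) : ℝ :=
  dZ l k a + (∑ s, Gv a l s * Zv k s) - ∑ s, Gv s l k * Zv s a

theorem key {n : ℕ}
    (cv Gv : Fin n → Fin n → Fin n → ℝ)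
    (dc dG : Fin n → Fin n → Fin n → Fin n → ℝ)
    (Xv : Fin n → ℝ) (dX : Fin n → Fin n → ℝ) (ddX : Fin n → Fin n → Fin n → ℝ)
    (Zv : Fin n → Fin n → ℝ) (dZ : Fin n → Fin n → Fin n → ℝ)
    (Nc : Fin n → Fin n → Fin n → Fin n → ℝ)
    (Rv : Fin n → Fin n → Fin n → Fin n → ℝ)
    (hZ : ∀ k a, Zv k a = dX k a + ∑ s, Gv a k s * Xv s)
    (hdZ : ∀ l k a, dZ l k a = ddX l k a + ∑ s, (dG l a k s * Xv s + Gv a k s * dX l s))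
    (hN : ∀ l i j k, Nc l i j k
      = dc l i j k + ∑ s, (Gv i l s * cv s j k - Gv s l j * cv i s k - Gv s l k * cv i j s))
    (hR : ∀ a l α β, Rv a l α β
      = dG α a β l - dG β a α l + ∑ s, (Gv a α s * Gv s β l - Gv a β s * Gv s α l))
    (hGsym : ∀ i j k, Gv i j k = Gv i k j)
    (hddX : ∀ l k a, ddX l k a = ddX k l a)
    (hNsym : ∀ l i j k, Nc l i j k = Nc j i l k)
    (hA : ∀ i j k, (∑ a, cv i j a * Zv k a) = ∑ a, cv i k a * Zv j a)
    (hdA : ∀ l i j k, (∑ a, (dc l i j a * Zv k a + cv i j a * dZ l k a))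
         = ∑ a, (dc l i k a * Zv j a + cv i k a * dZ l j a))
    (q p m i : Fin n) :
    ∑ l, (∑ k, (Rv k l m i * cv q p k + Rv k l i p * cv q m k + Rv k l p m * cv q i k)) * Xv l
      = 0 := by
  -- Ricci identity: antisymmetrized second covariant derivative gives curvature
  have ricci : ∀ l k a, Wf Gv Zv dZ l k a - Wf Gv Zv dZ k l a = ∑ s, Rv a s l k * Xv s := by
    intro l k a
    have hMid : ∀ u v : Fin n, (∑ s, Gv a u s * Zv v s)
        = (∑ s, Gv a u s * dX v s) + ∑ s, ∑ t, Gv a u s * (Gv s v t * Xv t) := by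
      intro u v
      rw [← Finset.sum_add_distrib]
      exact Finset.sum_congr rfl fun s _ => by rw [hZ, mul_add, Finset.mul_sum]
    have hT : (∑ s, Gv s l k * Zv s a) = ∑ s, Gv s k l * Zv s a :=
      Finset.sum_congr rfl fun s _ => by rw [hGsym s l k]
    have hW1 : Wf Gv Zv dZ l k a
        = ddX l k a + ((∑ s, dG l a k s * Xv s) + ∑ s, Gv a k s * dX l s)
          + ((∑ s, Gv a l s * dX k s) + ∑ s, ∑ t, Gv a l s * (Gv s k t * Xv t))
          - ∑ s, Gv s k l * Zv s a := by
      simp only [Wf]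
      rw [hdZ, Finset.sum_add_distrib, hMid l k, hT]
    have hW2 : Wf Gv Zv dZ k l a
        = ddX l k a + ((∑ s, dG k a l s * Xv s) + ∑ s, Gv a l s * dX k s)
          + ((∑ s, Gv a k s * dX l s) + ∑ s, ∑ t, Gv a k s * (Gv s l t * Xv t))
          - ∑ s, Gv s k l * Zv s a := by
      simp only [Wf]
      rw [hdZ, Finset.sum_add_distrib, hMid k l, hddX k l a]
    have hRs : ∀ s, Rv a s l k * Xv s
        = (dG l a k s * Xv s - dG k a l s * Xv s)
          + ((∑ t, Gv a l t * (Gv t k s * Xv s)) - ∑ t, Gv a k t * (Gv t l s * Xv s)) := by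
      intro s
      rw [hR, add_mul, sub_mul, Finset.sum_mul, ← Finset.sum_sub_distrib]
      congr 1
      exact Finset.sum_congr rfl fun t _ => by ring
    have hRHS : (∑ s, Rv a s l k * Xv s)
        = ((∑ s, dG l a k s * Xv s) - ∑ s, dG k a l s * Xv s)
          + ((∑ s, ∑ t, Gv a l s * (Gv s k t * Xv t))
            - ∑ s, ∑ t, Gv a k s * (Gv s l t * Xv t)) := by
      rw [Finset.sum_congr rfl fun s _ => hRs s, Finset.sum_add_distrib,
        Finset.sum_sub_distrib, Finset.sum_sub_distrib,
        Finset.sum_comm (f := fun s t => Gv a l t * (Gv t k s * Xv s)),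
        Finset.sum_comm (f := fun s t => Gv a k t * (Gv t l s * Xv s))]
    rw [hW1, hW2, hRHS]
    ring
  -- expansion of the covariant derivative of the admissibility tensor
  have expand : ∀ l i j k,
      (∑ a, (Nc l i j a * Zv k a + cv i j a * Wf Gv Zv dZ l k a))
      = (∑ a, (dc l i j a * Zv k a + cv i j a * dZ l k a))
        + ∑ s, (Gv i l s * ∑ a, cv s j a * Zv k a
            - Gv s l j * ∑ a, cv i s a * Zv k a
            - Gv s l k * ∑ a, cv i j a * Zv s a) := by
    intro l i j k
    have inner1 : ∀ a, Nc l i j a * Zv k a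
        = dc l i j a * Zv k a
          + ((∑ s, Gv i l s * (cv s j a * Zv k a))
            - (∑ s, Gv s l j * (cv i s a * Zv k a))
            - ∑ s, Gv s l a * (cv i j s * Zv k a)) := by
      intro a
      rw [hN, add_mul, Finset.sum_mul, ← Finset.sum_sub_distrib, ← Finset.sum_sub_distrib]
      congr 1
      exact Finset.sum_congr rfl fun s _ => by ring
    have h2 : (∑ a, Nc l i j a * Zv k a)
        = (∑ a, dc l i j a * Zv k a)
          + ((∑ a, ∑ s, Gv i l s * (cv s j a * Zv k a))
            - (∑ a, ∑ s, Gv s l j * (cv i s a * Zv k a))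
            - ∑ a, ∑ s, Gv s l a * (cv i j s * Zv k a)) := by
      rw [Finset.sum_congr rfl fun a _ => inner1 a, Finset.sum_add_distrib,
        Finset.sum_sub_distrib, Finset.sum_sub_distrib]
    have inner2 : ∀ a, cv i j a * Wf Gv Zv dZ l k a
        = (cv i j a * dZ l k a + ∑ s, cv i j a * (Gv a l s * Zv k s))
          - ∑ s, cv i j a * (Gv s l k * Zv s a) := by
      intro a
      simp only [Wf]
      rw [mul_sub, mul_add, Finset.mul_sum, Finset.mul_sum]
    have h3 : (∑ a, cv i j a * Wf Gv Zv dZ l k a)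
        = ((∑ a, cv i j a * dZ l k a) + ∑ a, ∑ s, cv i j a * (Gv a l s * Zv k s))
          - ∑ a, ∑ s, cv i j a * (Gv s l k * Zv s a) := by
      rw [Finset.sum_congr rfl fun a _ => inner2 a, Finset.sum_sub_distrib,
        Finset.sum_add_distrib]
    have hE1 : (∑ a, ∑ s, Gv i l s * (cv s j a * Zv k a))
        = ∑ s, Gv i l s * ∑ a, cv s j a * Zv k a := by
      rw [Finset.sum_comm]
      exact Finset.sum_congr rfl fun s _ => (Finset.mul_sum _ _ _).symm
    have hE2 : (∑ a, ∑ s, Gv s l j * (cv i s a * Zv k a))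
        = ∑ s, Gv s l j * ∑ a, cv i s a * Zv k a := by
      rw [Finset.sum_comm]
      exact Finset.sum_congr rfl fun s _ => (Finset.mul_sum _ _ _).symm
    have hG2 : (∑ a, ∑ s, cv i j a * (Gv s l k * Zv s a))
        = ∑ s, Gv s l k * ∑ a, cv i j a * Zv s a := by
      rw [Finset.sum_comm]
      refine Finset.sum_congr rfl fun s _ => ?_
      rw [Finset.mul_sum]
      exact Finset.sum_congr rfl fun a _ => by ring
    have hcancel : (∑ a, ∑ s, Gv s l a * (cv i j s * Zv k a))
        = ∑ a, ∑ s, cv i j a * (Gv a l s * Zv k s) := by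
      rw [Finset.sum_comm]
      exact Finset.sum_congr rfl fun a _ => Finset.sum_congr rfl fun s _ => by ring
    have hDF : (∑ a, (dc l i j a * Zv k a + cv i j a * dZ l k a))
        = (∑ a, dc l i j a * Zv k a) + ∑ a, cv i j a * dZ l k a :=
      Finset.sum_add_distrib
    have hS : (∑ s, (Gv i l s * ∑ a, cv s j a * Zv k a
            - Gv s l j * ∑ a, cv i s a * Zv k a
            - Gv s l k * ∑ a, cv i j a * Zv s a))
        = ((∑ s, Gv i l s * ∑ a, cv s j a * Zv k a)
            - ∑ s, Gv s l j * ∑ a, cv i s a * Zv k a)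
          - ∑ s, Gv s l k * ∑ a, cv i j a * Zv s a := by
      rw [Finset.sum_sub_distrib, Finset.sum_sub_distrib]
    have h1 : (∑ a, (Nc l i j a * Zv k a + cv i j a * Wf Gv Zv dZ l k a))
        = (∑ a, Nc l i j a * Zv k a) + ∑ a, cv i j a * Wf Gv Zv dZ l k a :=
      Finset.sum_add_distrib
    linarith [h1, h2, h3, hE1, hE2, hG2, hcancel, hDF, hS]
  -- the covariant derivative of the admissibility condition, symmetrized
  have deriv0 : ∀ l i j k,
      (∑ a, (Nc l i j a * Zv k a + cv i j a * Wf Gv Zv dZ l k a))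
      = ∑ a, (Nc l i k a * Zv j a + cv i k a * Wf Gv Zv dZ l j a) := by
    intro l i j k
    rw [expand l i j k, expand l i k j, hdA l i j k]
    congr 1
    refine Finset.sum_congr rfl fun s _ => ?_
    rw [hA s j k, hA i s k, hA i j s]
    ring
  have deriv1 : ∀ α β γ,
      (∑ a, Nc α q β a * Zv γ a) + (∑ a, cv q β a * Wf Gv Zv dZ α γ a)
      = (∑ a, Nc α q γ a * Zv β a) + ∑ a, cv q γ a * Wf Gv Zv dZ α β a := by
    intro α β γ
    have h := deriv0 α q β γ
    rwa [Finset.sum_add_distrib, Finset.sum_add_distrib] at h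
  have hSN : ∀ α β γ, (∑ a, Nc α q β a * Zv γ a) = ∑ a, Nc β q α a * Zv γ a :=
    fun α β γ => Finset.sum_congr rfl fun a _ => by rw [hNsym]
  have hSW : ∀ α β γ,
      (∑ a, cv q β a * Wf Gv Zv dZ α γ a) - (∑ a, cv q β a * Wf Gv Zv dZ γ α a)
      = ∑ a, cv q β a * ∑ s, Rv a s α γ * Xv s := by
    intro α β γ
    rw [← Finset.sum_sub_distrib]
    exact Finset.sum_congr rfl fun a _ => by rw [← mul_sub, ricci α γ a]
  have hRasym : ∀ a s u v, Rv a s u v = -Rv a s v u := by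
    intro a s u v
    have hs : (∑ t, (Gv a v t * Gv t u s - Gv a u t * Gv t v s))
        = -∑ t, (Gv a u t * Gv t v s - Gv a v t * Gv t u s) := by
      rw [← Finset.sum_neg_distrib]
      exact Finset.sum_congr rfl fun t _ => by ring
    rw [hR a s u v, hR a s v u, hs]
    ring
  have hSR : ∀ u v w, (∑ a, cv q w a * ∑ s, Rv a s u v * Xv s)
      = -∑ a, cv q w a * ∑ s, Rv a s v u * Xv s := by
    intro u v w
    rw [← Finset.sum_neg_distrib]
    refine Finset.sum_congr rfl fun a _ => ?_
    rw [← mul_neg, ← Finset.sum_neg_distrib]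
    congr 1
    refine Finset.sum_congr rfl fun s _ => ?_
    rw [hRasym a s u v]
    ring
  -- rewrite the goal in terms of the `SR` sums
  have htarget :
      (∑ l, (∑ k, (Rv k l m i * cv q p k + Rv k l i p * cv q m k + Rv k l p m * cv q i k))
          * Xv l)
      = (∑ a, cv q p a * ∑ s, Rv a s m i * Xv s)
        + (∑ a, cv q m a * ∑ s, Rv a s i p * Xv s)
        + ∑ a, cv q i a * ∑ s, Rv a s p m * Xv s := by
    have step1 : (∑ l, (∑ k, (Rv k l m i * cv q p k + Rv k l i p * cv q m k
          + Rv k l p m * cv q i k)) * Xv l)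
        = ((∑ l, ∑ k, Rv k l m i * cv q p k * Xv l)
            + ∑ l, ∑ k, Rv k l i p * cv q m k * Xv l)
          + ∑ l, ∑ k, Rv k l p m * cv q i k * Xv l := by
      rw [← Finset.sum_add_distrib, ← Finset.sum_add_distrib]
      refine Finset.sum_congr rfl fun l _ => ?_
      rw [Finset.sum_mul, ← Finset.sum_add_distrib, ← Finset.sum_add_distrib]
      exact Finset.sum_congr rfl fun k _ => by ring
    have step2 : ∀ u v w, (∑ l, ∑ k, Rv k l u v * cv q w k * Xv l)
        = ∑ a, cv q w a * ∑ s, Rv a s u v * Xv s := by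
      intro u v w
      rw [Finset.sum_comm]
      refine Finset.sum_congr rfl fun k _ => ?_
      rw [Finset.mul_sum]
      exact Finset.sum_congr rfl fun l _ => by ring
    rw [step1, step2 m i p, step2 i p m, step2 p m i]
  -- combine everything
  rw [htarget]
  have e1 := deriv1 m i p
  have e2 := deriv1 i p m
  have e3 := deriv1 p m i
  have n1 := hSN m i p
  have n2 := hSN i p m
  have n3 := hSN p m i
  have w1 := hSW m p i   -- C(i, W m p) - C(i, W p m) = SR(m,p,i)
  have w2 := hSW i m p
  have w3 := hSW p i m
  have r1 := hSR m p i
  have r2 := hSR i m p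
  have r3 := hSR p i m
  linarith [e1, e2, e3, n1, n2, n3, w1, w2, w3, r1, r2, r3]

end Statement11

open Statement11Helpers Statement11 in
theorem statement_11 {n : ℕ} (U : Set (Fin n → ℝ)) (hU : IsOpen U)
    (c : SC n)
    (hc_smooth : ∀ i j k, ContDiffOn ℝ (⊤ : ℕ∞) (c i j k) U)
    (hc_comm : ∀ i j k, ∀ x ∈ U, c i j k x = c i k j x)
    (hc_assoc : ∀ i j k l, ∀ x ∈ U,
      ∑ m, c i j m x * c m k l x = ∑ m, c i k m x * c m j l x)
    (Γ : SC n)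
    (hΓ_smooth : ∀ i j k, ContDiffOn ℝ (⊤ : ℕ∞) (Γ i j k) U)
    (hΓ_tor : ∀ i j k, ∀ x ∈ U, Γ i j k x = Γ i k j x)
    (hsym : ∀ i j k l, ∀ x ∈ U, nablaC Γ c l i j k x = nablaC Γ c j i l k x)
    (X : VF n) (hX : ∀ i, ContDiffOn ℝ (⊤ : ℕ∞) (X i) U)
    (hXadm : ∀ i j k, ∀ x ∈ U,
      ∑ m, c i j m x * nablaV Γ X k m x = ∑ m, c i k m x * nablaV Γ X j m x) :
    ∀ q p m i, ∀ x ∈ U,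
      ∑ l, (∑ k, (Riem Γ k l m i x * c q p k x + Riem Γ k l i p x * c q m k x
        + Riem Γ k l p m x * c q i k x)) * X l x = 0 := by
  intro q p m i x hx
  have hcd : ∀ i j k, ContDiffAt ℝ (⊤ : ℕ∞) (c i j k) x :=
    fun i j k => (hc_smooth i j k).contDiffAt (hU.mem_nhds hx)
  have hΓd : ∀ i j k, ContDiffAt ℝ (⊤ : ℕ∞) (Γ i j k) x :=
    fun i j k => (hΓ_smooth i j k).contDiffAt (hU.mem_nhds hx)
  have hXd : ∀ i, ContDiffAt ℝ (⊤ : ℕ∞) (X i) x :=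
    fun i => (hX i).contDiffAt (hU.mem_nhds hx)
  have hnVd : ∀ k a, DifferentiableAt ℝ (nablaV Γ X k a) x := by
    intro k a
    show DifferentiableAt ℝ (fun y => pd (X a) k y + ∑ s, Γ a k s y * X s y) x
    exact ((contDiffAt_pd (hXd a)).differentiableAt (by simp)).add
      (DifferentiableAt.fun_sum fun s _ =>
        ((hΓd a k s).differentiableAt (by simp)).mul ((hXd s).differentiableAt (by simp)))
  have hdZ : ∀ l k a, pd (nablaV Γ X k a) l x
      = pd (pd (X a) k) l x + ∑ s, (pd (Γ a k s) l x * X s x + Γ a k s x * pd (X s) l x) := by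
    intro l k a
    have e : nablaV Γ X k a = fun y => pd (X a) k y + ∑ s, Γ a k s y * X s y := rfl
    rw [e, pd_add ((contDiffAt_pd (hXd a)).differentiableAt (by simp))
      (DifferentiableAt.fun_sum fun s _ =>
        ((hΓd a k s).differentiableAt (by simp)).fun_mul ((hXd s).differentiableAt (by simp))),
      pd_sum Finset.univ _ (fun s _ =>
        ((hΓd a k s).differentiableAt (by simp)).fun_mul ((hXd s).differentiableAt (by simp)))]
    congr 1
    exact Finset.sum_congr rfl fun s _ =>
      pd_mul ((hΓd a k s).differentiableAt (by simp)) ((hXd s).differentiableAt (by simp))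
  have hF : ∀ i j k l, pd (fun y => ∑ a, c i j a y * nablaV Γ X k a y) l x
      = ∑ a, (pd (c i j a) l x * nablaV Γ X k a x + c i j a x * pd (nablaV Γ X k a) l x) := by
    intro i j k l
    rw [pd_sum Finset.univ _ (fun a _ =>
      ((hcd i j a).differentiableAt (by simp)).fun_mul (hnVd k a))]
    exact Finset.sum_congr rfl fun a _ =>
      pd_mul ((hcd i j a).differentiableAt (by simp)) (hnVd k a)
  have hdA : ∀ l i j k,
      (∑ a, (pd (c i j a) l x * nablaV Γ X k a x + c i j a x * pd (nablaV Γ X k a) l x))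
      = ∑ a, (pd (c i k a) l x * nablaV Γ X j a x + c i k a x * pd (nablaV Γ X j a) l x) := by
    intro l i j k
    rw [← hF i j k l, ← hF i k j l]
    exact pd_congr (Filter.eventuallyEq_of_mem (hU.mem_nhds hx) fun y hy => hXadm i j k y hy)
  exact key (fun i j k => c i j k x) (fun i j k => Γ i j k x)
    (fun l i j k => pd (c i j k) l x) (fun l i j k => pd (Γ i j k) l x)
    (fun i => X i x) (fun j i => pd (X i) j x) (fun l j i => pd (pd (X i) j) l x)
    (fun k a => nablaV Γ X k a x) (fun l k a => pd (nablaV Γ X k a) l x)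
    (fun l i j k => nablaC Γ c l i j k x) (fun a l α β => Riem Γ a l α β x)
    (fun k a => rfl) hdZ (fun l i j k => rfl) (fun a l α β => rfl)
    (fun i j k => hΓ_tor i j k x hx) (fun l k a => pd_comm (hXd a))
    (fun l i j k => hsym i j k l x hx) (fun i j k => hXadm i j k x hx)
    hdA q p m i
end
end

section
/- Let c^i_{jk} be smooth structure functions on an open set U ⊆ ℝ^n, symmetric in (j,k) and associative, and let Γ^i_{jk} be a torsionless connection satisfying the symmetry condition ∇_l c^i_{jk} = ∇_j c^i_{lk}. Then the condition R^k_{lmi} c^n_{pk} + R^k_{lip} c^n_{mk} + R^k_{lpm} c^n_{ik} = 0 (for all indices) is equivalent to the condition R^n_{smi} c^s_{lp} + R^n_{sip} c^s_{lm} + R^n_{spm} c^s_{li} = 0 (for all indices), i.e. to R(Y,Z)(X∘W) + R(X,Y)(Z∘W) + R(Z,X)(Y∘W) = 0 for all vector fields X,Y,Z,W. -/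
open scoped BigOperators

noncomputable section

lemma pd_congr {f g : (Fin n → ℝ) → ℝ} {U : Set (Fin n → ℝ)} (hU : IsOpen U)
    (h : ∀ y ∈ U, f y = g y) {x : (Fin n → ℝ)} (hx : x ∈ U) (j : Fin n) :
    pd f j x = pd g j x := by
  have : f =ᶠ[nhds x] g := Filter.eventuallyEq_of_mem (hU.mem_nhds hx) h
  simp only [pd, this.fderiv_eq]

lemma pd_add {f g : (Fin n → ℝ) → ℝ} {x : Fin n → ℝ} (hf : DifferentiableAt ℝ f x)
    (hg : DifferentiableAt ℝ g x) (j : Fin n) :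
    pd (fun y => f y + g y) j x = pd f j x + pd g j x := by
  simp only [pd]
  rw [fderiv_fun_add hf hg]
  rfl

lemma pd_mul {f g : (Fin n → ℝ) → ℝ} {x : Fin n → ℝ} (hf : DifferentiableAt ℝ f x)
    (hg : DifferentiableAt ℝ g x) (j : Fin n) :
    pd (fun y => f y * g y) j x = pd f j x * g x + f x * pd g j x := by
  simp only [pd]
  rw [fderiv_fun_mul hf hg]
  simp only [ContinuousLinearMap.add_apply, ContinuousLinearMap.smul_apply, smul_eq_mul]
  ring

lemma pd_sum {ι : Type*} (s : Finset ι) {F : ι → (Fin n → ℝ) → ℝ} {x : Fin n → ℝ}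
    (hF : ∀ i ∈ s, DifferentiableAt ℝ (F i) x) (j : Fin n) :
    pd (fun y => ∑ i ∈ s, F i y) j x = ∑ i ∈ s, pd (F i) j x := by
  classical
  induction s using Finset.induction with
  | empty =>
    simp only [Finset.sum_empty]
    rw [show (fun _ : Fin n → ℝ => (0:ℝ)) = (fun _ => (0:ℝ)) from rfl, pd]
    rw [fderiv_fun_const]
    simp
  | @insert a s' hni ih =>
    simp only [Finset.sum_insert hni]
    rw [pd_add (hF a (Finset.mem_insert_self a s'))
      (DifferentiableAt.fun_sum fun i hi => hF i (Finset.mem_insert_of_mem hi)),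
      ih (fun i hi => hF i (Finset.mem_insert_of_mem hi))]

lemma pd_comm {f : (Fin n → ℝ) → ℝ} {x : Fin n → ℝ} (hf : ContDiffAt ℝ 2 f x) (a b : Fin n) :
    pd (pd f a) b x = pd (pd f b) a x := by
  have hsymm := hf.isSymmSndFDerivAt (by simp [minSmoothness_of_isRCLikeNormedField])
  have hd : DifferentiableAt ℝ (fderiv ℝ f) x := by
    have := hf.fderiv_right (m := 1) (le_refl _)
    exact this.differentiableAt one_ne_zero
  have key : ∀ v : (Fin n → ℝ), ∀ w : Fin n, pd (fun y => fderiv ℝ f y v) w x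
      = fderiv ℝ (fderiv ℝ f) x (Pi.single w 1) v := by
    intro v w
    simp only [pd]
    rw [fderiv_clm_apply hd (differentiableAt_const v)]
    simp
  have e1 : pd f a = fun y => fderiv ℝ f y (Pi.single a 1) := rfl
  have e2 : pd f b = fun y => fderiv ℝ f y (Pi.single b 1) := rfl
  rw [e1, e2, key _ b, key _ a]
  exact hsymm _ _


abbrev T3 (n : ℕ) := Fin n → Fin n → Fin n → ℝ
abbrev T4 (n : ℕ) := Fin n → Fin n → Fin n → Fin n → ℝ
abbrev T5 (n : ℕ) := Fin n → Fin n → Fin n → Fin n → Fin n → ℝ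

def SS (C G : T3 n) (DC : T4 n) (l i j k : Fin n) : ℝ :=
  DC l i j k + ∑ s, (G i l s * C s j k - G s l j * C i s k - G s l k * C i j s)

def DS (C G : T3 n) (DC DG : T4 n) (DDC : T5 n) (m l i j k : Fin n) : ℝ :=
  DDC m l i j k + ∑ s, (DG m i l s * C s j k + G i l s * DC m s j k
    - DG m s l j * C i s k - G s l j * DC m i s k
    - DG m s l k * C i j s - G s l k * DC m i j s)

def GG2 (C G : T3 n) (DC DG : T4 n) (DDC : T5 n) (m p i j k : Fin n) : ℝ :=
  DS C G DC DG DDC m p i j k + ∑ s, (G i m s * SS C G DC p s j k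
    - G s m p * SS C G DC s i j k - G s m j * SS C G DC p i s k - G s m k * SS C G DC p i j s)

def RR (G : T3 n) (DG : T4 n) (i l m p : Fin n) : ℝ :=
  DG m i p l - DG p i m l + ∑ s, (G i m s * G s p l - G i p s * G s m l)

lemma bianchi (G : T3 n) (DG : T4 n)
    (hG : ∀ a b c, G a b c = G a c b)
    (hDG : ∀ m a b c, DG m a b c = DG m a c b)
    (i l m p : Fin n) :
    RR G DG i l m p + RR G DG i m p l + RR G DG i p l m = 0 := by
  have hsum : ((∑ s, (G i m s * G s p l - G i p s * G s m l))
      + ∑ s, (G i p s * G s l m - G i l s * G s p m))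
      + ∑ s, (G i l s * G s m p - G i m s * G s l p) = 0 := by
    rw [← Finset.sum_add_distrib, ← Finset.sum_add_distrib]
    apply Finset.sum_eq_zero
    intro s _
    rw [hG s p l, hG s m l, hG s p m]
    ring
  simp only [RR]
  linear_combination hsum + DG m i p l * 0 + hDG m i p l + hDG p i l m + hDG l i m p

lemma step2 (C G : T3 n) (DC DG : T4 n) (DDC : T5 n)
    (hS : ∀ l i j k, SS C G DC l i j k = SS C G DC j i l k)
    (hDS : ∀ m l i j k, DS C G DC DG DDC m l i j k = DS C G DC DG DDC m j i l k)
    (m p i j k : Fin n) :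
    GG2 C G DC DG DDC m p i j k = GG2 C G DC DG DDC m j i p k := by
  simp only [GG2]
  rw [hDS m p i j k]
  congr 1
  apply Finset.sum_congr rfl
  intro s _
  rw [hS p s j k, hS s i j k, hS p i s k, hS p i j s]
  ring

lemma swap_sum (f : Fin n → Fin n → ℝ) :
    (∑ x : Fin n, ∑ y : Fin n, f x y) = ∑ x : Fin n, ∑ y : Fin n, f y x :=
  Finset.sum_comm

lemma step1 (C G : T3 n) (DC DG : T4 n) (DDC : T5 n)
    (hG : ∀ a b c, G a b c = G a c b)
    (hDDC : ∀ m p i j k, DDC m p i j k = DDC p m i j k)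
    (m p i j k : Fin n) :
    GG2 C G DC DG DDC m p i j k - GG2 C G DC DG DDC p m i j k
      = ∑ s, (RR G DG i s m p * C s j k - RR G DG s j m p * C i s k
          - RR G DG s k m p * C i j s) := by
  have hrow : (∑ x : Fin n, G x p m * DC x i j k) = ∑ x : Fin n, G x m p * DC x i j k :=
    Finset.sum_congr rfl fun x _ => by rw [hG x p m]
  have e1 : (∑ x : Fin n, ∑ y : Fin n, G i m x * G x p y * C y j k)
      = ∑ x : Fin n, ∑ y : Fin n, G i m y * G y p x * C x j k := swap_sum _
  have e2 : (∑ x : Fin n, ∑ y : Fin n, G i p x * G x m y * C y j k)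
      = ∑ x : Fin n, ∑ y : Fin n, G i p y * G y m x * C x j k := swap_sum _
  have e3 : (∑ x : Fin n, ∑ y : Fin n, G x m j * G y p x * C i y k)
      = ∑ x : Fin n, ∑ y : Fin n, G x p y * G y m j * C i x k := by
    rw [swap_sum]; exact Finset.sum_congr rfl fun x _ => Finset.sum_congr rfl fun y _ => by ring
  have e4 : (∑ x : Fin n, ∑ y : Fin n, G x p j * G y m x * C i y k)
      = ∑ x : Fin n, ∑ y : Fin n, G x m y * G y p j * C i x k := by
    rw [swap_sum]; exact Finset.sum_congr rfl fun x _ => Finset.sum_congr rfl fun y _ => by ring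
  have e5 : (∑ x : Fin n, ∑ y : Fin n, G x m k * G y p x * C i j y)
      = ∑ x : Fin n, ∑ y : Fin n, G x p y * G y m k * C i j x := by
    rw [swap_sum]; exact Finset.sum_congr rfl fun x _ => Finset.sum_congr rfl fun y _ => by ring
  have e6 : (∑ x : Fin n, ∑ y : Fin n, G x p k * G y m x * C i j y)
      = ∑ x : Fin n, ∑ y : Fin n, G x m y * G y p k * C i j x := by
    rw [swap_sum]; exact Finset.sum_congr rfl fun x _ => Finset.sum_congr rfl fun y _ => by ring
  have e7 : (∑ x : Fin n, ∑ y : Fin n, G x p m * G i x y * C y j k)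
      = ∑ x : Fin n, ∑ y : Fin n, G x m p * G i x y * C y j k :=
    Finset.sum_congr rfl fun x _ => by rw [hG x p m]
  have e8 : (∑ x : Fin n, ∑ y : Fin n, G x p m * G y x j * C i y k)
      = ∑ x : Fin n, ∑ y : Fin n, G x m p * G y x j * C i y k :=
    Finset.sum_congr rfl fun x _ => by rw [hG x p m]
  have e9 : (∑ x : Fin n, ∑ y : Fin n, G x p m * G y x k * C i j y)
      = ∑ x : Fin n, ∑ y : Fin n, G x m p * G y x k * C i j y :=
    Finset.sum_congr rfl fun x _ => by rw [hG x p m]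
  have e10 : (∑ x : Fin n, ∑ y : Fin n, G x p j * G i m y * C y x k)
      = ∑ x : Fin n, ∑ y : Fin n, G i m x * G y p j * C x y k := by
    rw [swap_sum]; exact Finset.sum_congr rfl fun x _ => Finset.sum_congr rfl fun y _ => by ring
  have e11 : (∑ x : Fin n, ∑ y : Fin n, G x p k * G i m y * C y j x)
      = ∑ x : Fin n, ∑ y : Fin n, G i m x * G y p k * C x j y := by
    rw [swap_sum]; exact Finset.sum_congr rfl fun x _ => Finset.sum_congr rfl fun y _ => by ring
  have e12 : (∑ x : Fin n, ∑ y : Fin n, G i p x * G y m j * C x y k)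
      = ∑ x : Fin n, ∑ y : Fin n, G x m j * G i p y * C y x k := by
    rw [swap_sum]; exact Finset.sum_congr rfl fun x _ => Finset.sum_congr rfl fun y _ => by ring
  have e13 : (∑ x : Fin n, ∑ y : Fin n, G i p x * G y m k * C x j y)
      = ∑ x : Fin n, ∑ y : Fin n, G x m k * G i p y * C y j x := by
    rw [swap_sum]; exact Finset.sum_congr rfl fun x _ => Finset.sum_congr rfl fun y _ => by ring
  have e14 : (∑ x : Fin n, ∑ y : Fin n, G x p k * G y m j * C i y x)
      = ∑ x : Fin n, ∑ y : Fin n, G x m j * G y p k * C i x y := by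
    rw [swap_sum]; exact Finset.sum_congr rfl fun x _ => Finset.sum_congr rfl fun y _ => by ring
  have e15 : (∑ x : Fin n, ∑ y : Fin n, G x p j * G y m k * C i x y)
      = ∑ x : Fin n, ∑ y : Fin n, G x m k * G y p j * C i y x := by
    rw [swap_sum]; exact Finset.sum_congr rfl fun x _ => Finset.sum_congr rfl fun y _ => by ring
  have hD := hDDC p m i j k
  simp only [GG2, DS, SS, RR, mul_add, mul_sub, sub_mul, add_mul, Finset.mul_sum,
    Finset.sum_mul, Finset.sum_add_distrib, Finset.sum_sub_distrib]
  ring_nf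
  rw [hD, hrow, e1, e2, e3, e4, e5, e6, e7, e8, e9, e10, e11, e12, e13, e14, e15]
  ring

lemma key_alg (C G : T3 n) (DC DG : T4 n) (DDC : T5 n)
    (hG : ∀ a b c, G a b c = G a c b)
    (hDG : ∀ m a b c, DG m a b c = DG m a c b)
    (hDDC : ∀ m p i j k, DDC m p i j k = DDC p m i j k)
    (hS : ∀ l i j k, SS C G DC l i j k = SS C G DC j i l k)
    (hDS : ∀ m l i j k, DS C G DC DG DDC m l i j k = DS C G DC DG DDC m j i l k)
    (m p i j k : Fin n) :
    ∑ s, (RR G DG i s m p * C s j k + RR G DG i s p j * C s m k + RR G DG i s j m * C s p k)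
      = ∑ s, (RR G DG s k m p * C i j s + RR G DG s k p j * C i m s
          + RR G DG s k j m * C i p s) := by
  have A := step1 C G DC DG DDC hG hDDC m p i j k
  have B := step1 C G DC DG DDC hG hDDC p j i m k
  have Cc := step1 C G DC DG DDC hG hDDC j m i p k
  have s1 := step2 C G DC DG DDC hS hDS m p i j k
  have s2 := step2 C G DC DG DDC hS hDS p m i j k
  have s3 := step2 C G DC DG DDC hS hDS j p i m k
  have hB : (∑ s, (RR G DG s j m p * C i s k + RR G DG s m p j * C i s k
      + RR G DG s p j m * C i s k)) = 0 := by
    apply Finset.sum_eq_zero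
    intro s _
    have := bianchi G DG hG hDG s j m p
    linear_combination C i s k * this
  simp only [Finset.sum_add_distrib, Finset.sum_sub_distrib] at A B Cc hB ⊢
  linarith [A, B, Cc, s1, s2, s3, hB]


lemma pd_sub {f g : (Fin n → ℝ) → ℝ} {x : Fin n → ℝ} (hf : DifferentiableAt ℝ f x)
    (hg : DifferentiableAt ℝ g x) (j : Fin n) :
    pd (fun y => f y - g y) j x = pd f j x - pd g j x := by
  simp only [pd]
  rw [fderiv_fun_sub hf hg]
  rfl

lemma contDiffOn_pd {f : (Fin n → ℝ) → ℝ} {U : Set (Fin n → ℝ)} (hU : IsOpen U)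
    (hf : ContDiffOn ℝ (⊤ : ℕ∞) f U) (j : Fin n) : ContDiffOn ℝ (⊤ : ℕ∞) (pd f j) U := by
  have h1 : ContDiffOn ℝ (⊤ : ℕ∞) (fderiv ℝ f) U := hf.fderiv_of_isOpen hU (by simp)
  exact h1.clm_apply contDiffOn_const

section expand
variable {U : Set (Fin n → ℝ)} (hU : IsOpen U) (Γ c : SC n)
  (hc_smooth : ∀ i j k, ContDiffOn ℝ (⊤ : ℕ∞) (c i j k) U)
  (hΓ_smooth : ∀ i j k, ContDiffOn ℝ (⊤ : ℕ∞) (Γ i j k) U)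
  {x : Fin n → ℝ} (hx : x ∈ U)

include hU hc_smooth hΓ_smooth hx

omit hΓ_smooth in
lemma diff_c : ∀ i j k, DifferentiableAt ℝ (c i j k) x := fun i j k =>
  (((hc_smooth i j k) x hx).contDiffAt (hU.mem_nhds hx)).differentiableAt (by simp)

omit hc_smooth in
lemma diff_Γ : ∀ i j k, DifferentiableAt ℝ (Γ i j k) x := fun i j k =>
  (((hΓ_smooth i j k) x hx).contDiffAt (hU.mem_nhds hx)).differentiableAt (by simp)

omit hΓ_smooth in
lemma diff_pdc : ∀ i j k l, DifferentiableAt ℝ (pd (c i j k) l) x := fun i j k l =>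
  (((contDiffOn_pd hU (hc_smooth i j k) l) x hx).contDiffAt (hU.mem_nhds hx)).differentiableAt
    (by simp)

/-- expansion of `∂_m ∇_l c^i_{jk}` -/
lemma pd_nablaC (m l i j k : Fin n) :
    pd (nablaC Γ c l i j k) m x
      = pd (pd (c i j k) l) m x + ∑ s, (pd (Γ i l s) m x * c s j k x
          + Γ i l s x * pd (c s j k) m x
          - pd (Γ s l j) m x * c i s k x - Γ s l j x * pd (c i s k) m x
          - pd (Γ s l k) m x * c i j s x - Γ s l k x * pd (c i j s) m x) := by
  have hdc := diff_c hU c hc_smooth hx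
  have hdΓ := diff_Γ hU Γ hΓ_smooth hx
  have hdpdc := diff_pdc hU c hc_smooth hx
  have hterm : ∀ s : Fin n, DifferentiableAt ℝ
      (fun y => Γ i l s y * c s j k y - Γ s l j y * c i s k y - Γ s l k y * c i j s y) x :=
    fun s => (((hdΓ i l s).mul (hdc s j k)).sub ((hdΓ s l j).mul (hdc i s k))).sub
      ((hdΓ s l k).mul (hdc i j s))
  have e0 : nablaC Γ c l i j k = fun y => pd (c i j k) l y
      + ∑ s, (Γ i l s y * c s j k y - Γ s l j y * c i s k y - Γ s l k y * c i j s y) := rfl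
  rw [e0, pd_add (hdpdc i j k l) (DifferentiableAt.fun_sum fun s _ => hterm s) m,
    pd_sum Finset.univ (fun s _ => hterm s) m]
  congr 1
  apply Finset.sum_congr rfl
  intro s _
  rw [pd_sub (((hdΓ i l s).fun_mul (hdc s j k)).fun_sub ((hdΓ s l j).fun_mul (hdc i s k)))
      ((hdΓ s l k).fun_mul (hdc i j s)) m,
    pd_sub ((hdΓ i l s).fun_mul (hdc s j k)) ((hdΓ s l j).fun_mul (hdc i s k)) m,
    pd_mul (hdΓ i l s) (hdc s j k) m, pd_mul (hdΓ s l j) (hdc i s k) m,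
    pd_mul (hdΓ s l k) (hdc i j s) m]
  ring

end expand


theorem statement_12 {n : ℕ} (U : Set (Fin n → ℝ)) (hU : IsOpen U)
    (c : SC n)
    (hc_smooth : ∀ i j k, ContDiffOn ℝ (⊤ : ℕ∞) (c i j k) U)
    (hc_comm : ∀ i j k, ∀ x ∈ U, c i j k x = c i k j x)
    (hc_assoc : ∀ i j k l, ∀ x ∈ U,
      ∑ m, c i j m x * c m k l x = ∑ m, c i k m x * c m j l x)
    (Γ : SC n)
    (hΓ_smooth : ∀ i j k, ContDiffOn ℝ (⊤ : ℕ∞) (Γ i j k) U)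
    (hΓ_tor : ∀ i j k, ∀ x ∈ U, Γ i j k x = Γ i k j x)
    (hsym : ∀ i j k l, ∀ x ∈ U, nablaC Γ c l i j k x = nablaC Γ c j i l k x) :
    (∀ q p m i l, ∀ x ∈ U,
        ∑ k, (Riem Γ k l m i x * c q p k x + Riem Γ k l i p x * c q m k x
          + Riem Γ k l p m x * c q i k x) = 0)
      ↔ (∀ q l m i p, ∀ x ∈ U,
        ∑ s, (Riem Γ q s m i x * c s l p x + Riem Γ q s i p x * c s l m x
          + Riem Γ q s p m x * c s l i x) = 0)  := by
  classical
  have ID : ∀ q l m i p : Fin n, ∀ x ∈ U,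
      (∑ s, (Riem Γ q s m i x * c s l p x + Riem Γ q s i p x * c s l m x
        + Riem Γ q s p m x * c s l i x))
      = ∑ k, (Riem Γ k l m i x * c q p k x + Riem Γ k l i p x * c q m k x
        + Riem Γ k l p m x * c q i k x) := by
    intro q l m i p x hx
    have hG : ∀ a b d : Fin n, Γ a b d x = Γ a d b x := fun a b d => hΓ_tor a b d x hx
    have hDG : ∀ (m a b d : Fin n), pd (Γ a b d) m x = pd (Γ a d b) m x := fun m a b d =>
      pd_congr hU (fun y hy => hΓ_tor a b d y hy) hx m
    have hDDC : ∀ (m p a b d : Fin n),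
        pd (pd (c a b d) p) m x = pd (pd (c a b d) m) p x := fun m p a b d =>
      pd_comm (((hc_smooth a b d x hx).contDiffAt (hU.mem_nhds hx)).of_le (WithTop.coe_le_coe.mpr le_top)) p m
    have hSx : ∀ l a b d : Fin n,
        SS (fun a b d => c a b d x) (fun a b d => Γ a b d x)
          (fun l a b d => pd (c a b d) l x) l a b d
        = SS (fun a b d => c a b d x) (fun a b d => Γ a b d x)
          (fun l a b d => pd (c a b d) l x) b a l d := fun l a b d => hsym a b d l x hx
    have hDSx : ∀ m l a b d : Fin n,
        DS (fun a b d => c a b d x) (fun a b d => Γ a b d x)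
          (fun l a b d => pd (c a b d) l x) (fun m a b d => pd (Γ a b d) m x)
          (fun m l a b d => pd (pd (c a b d) l) m x) m l a b d
        = DS (fun a b d => c a b d x) (fun a b d => Γ a b d x)
          (fun l a b d => pd (c a b d) l x) (fun m a b d => pd (Γ a b d) m x)
          (fun m l a b d => pd (pd (c a b d) l) m x) m b a l d := by
      intro m l a b d
      have h1 := pd_nablaC hU Γ c hc_smooth hΓ_smooth hx m l a b d
      have h2 := pd_nablaC hU Γ c hc_smooth hΓ_smooth hx m b a l d
      have h3 : pd (nablaC Γ c l a b d) m x = pd (nablaC Γ c b a l d) m x :=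
        pd_congr hU (fun y hy => hsym a b d l y hy) hx m
      calc DS (fun a b d => c a b d x) (fun a b d => Γ a b d x)
              (fun l a b d => pd (c a b d) l x) (fun m a b d => pd (Γ a b d) m x)
              (fun m l a b d => pd (pd (c a b d) l) m x) m l a b d
          = pd (nablaC Γ c l a b d) m x := h1.symm
        _ = pd (nablaC Γ c b a l d) m x := h3
        _ = _ := h2
    have KA := key_alg (fun a b d => c a b d x) (fun a b d => Γ a b d x)
      (fun l a b d => pd (c a b d) l x) (fun m a b d => pd (Γ a b d) m x)
      (fun m l a b d => pd (pd (c a b d) l) m x) hG hDG hDDC hSx hDSx m i q p l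
    have KA' : (∑ s, (Riem Γ q s m i x * c s p l x + Riem Γ q s i p x * c s m l x
          + Riem Γ q s p m x * c s i l x))
        = ∑ s, (Riem Γ s l m i x * c q p s x + Riem Γ s l i p x * c q m s x
          + Riem Γ s l p m x * c q i s x) := KA
    have swapC : (∑ s, (Riem Γ q s m i x * c s l p x + Riem Γ q s i p x * c s l m x
          + Riem Γ q s p m x * c s l i x))
        = ∑ s, (Riem Γ q s m i x * c s p l x + Riem Γ q s i p x * c s m l x
          + Riem Γ q s p m x * c s i l x) :=
      Finset.sum_congr rfl fun s _ => by
        rw [hc_comm s l p x hx, hc_comm s l m x hx, hc_comm s l i x hx]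
    rw [swapC, KA']
  constructor
  · intro h1 q l m i p x hx
    rw [ID q l m i p x hx]
    exact h1 q p m i l x hx
  · intro h2 q p m i l x hx
    rw [← ID q l m i p x hx]
    exact h2 q l m i p x hx
end
end

section
/- Let Γ^i_{jk} be a torsionless connection on an open set U ⊆ ℝ^n satisfying the symmetry condition ∇_l c^i_{jk} = ∇_j c^i_{lk} for the canonical structure functions c^i_{jk} = δ^i_j δ^i_k. Then the Christoffel symbols satisfy: Γ^i_{kk} = −Γ^i_{ki} for all i ≠ k, and Γ^i_{kl} = 0 whenever i, k, l are pairwise distinct. -/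
open scoped BigOperators

noncomputable section

/-- Canonical structure functions `c^i_{jk} = δ^i_j δ^i_k`. -/
def cdelta {n : ℕ} : SC n := fun i j k _ => if j = i ∧ k = i then 1 else 0

lemma nablaC_cdelta {n : ℕ} (Γ : SC n) (l i j k : Fin n) (x : Fin n → ℝ) :
    nablaC Γ cdelta l i j k x =
      (if j = k then Γ i l j x else 0) - (if k = i then Γ i l j x else 0)
        - (if j = i then Γ i l k x else 0) := by
  have hpd : pd (cdelta (n := n) i j k) l x = 0 := by
    have : cdelta (n := n) i j k = fun _ => (if j = i ∧ k = i then (1:ℝ) else 0) := rfl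
    rw [pd, this, fderiv_fun_const]
    simp
  simp only [nablaC, hpd, cdelta, mul_ite, mul_one, mul_zero, zero_add,
    Finset.sum_sub_distrib, ite_and]
  rcases eq_or_ne j i with h | h <;> rcases eq_or_ne k i with h2 | h2 <;>
    rcases eq_or_ne j k with h3 | h3 <;> simp_all [eq_comm]

theorem statement_13 {n : ℕ} (U : Set (Fin n → ℝ)) (hU : IsOpen U)
    (Γ : SC n)
    (hΓ_smooth : ∀ i j k, ContDiffOn ℝ (⊤ : ℕ∞) (Γ i j k) U)
    (hΓ_tor : ∀ i j k, ∀ x ∈ U, Γ i j k x = Γ i k j x)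
    (hsym : ∀ i j k l, ∀ x ∈ U,
      nablaC Γ cdelta l i j k x = nablaC Γ cdelta j i l k x) :
    (∀ i k, i ≠ k → ∀ x ∈ U, Γ i k k x = -(Γ i k i x)) ∧
      (∀ i k l, i ≠ k → k ≠ l → i ≠ l → ∀ x ∈ U, Γ i k l x = 0) := by
  constructor
  · intro i k hik x hx
    have h := hsym i k k i x hx
    rw [nablaC_cdelta, nablaC_cdelta] at h
    simp [hik.symm, Ne.symm hik, hik] at h
    rw [← hΓ_tor i i k x hx]
    linarith
  · intro i k l hik hkl hil x hx
    have h := hsym i k l i x hx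
    rw [nablaC_cdelta, nablaC_cdelta] at h
    simp [hik.symm, Ne.symm hik, hkl, Ne.symm hil, hil] at h
    linarith
end
end

section
/- Let Γ^i_{jk} be a torsionless connection on an open set U ⊆ ℝ^n satisfying Γ^i_{kk} = −Γ^i_{ki} for i ≠ k and Γ^i_{kl} = 0 for pairwise distinct i,k,l (the identities following from the symmetry condition in canonical coordinates). Then a smooth vector field X = (v^1,…,v^n) satisfies c^i_{jm} ∇_k X^m = c^i_{km} ∇_j X^m for all i,j,k (with c^i_{jk} = δ^i_j δ^i_k) if and only if ∂_k v^i = Γ^i_{ki}(v^k − v^i) for all i ≠ k. -/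
open scoped BigOperators

noncomputable section

theorem statement_14 {n : ℕ} (U : Set (Fin n → ℝ)) (hU : IsOpen U)
    (Γ : SC n)
    (hΓ_smooth : ∀ i j k, ContDiffOn ℝ (⊤ : ℕ∞) (Γ i j k) U)
    (hΓ_tor : ∀ i j k, ∀ x ∈ U, Γ i j k x = Γ i k j x)
    (heg1 : ∀ i k, i ≠ k → ∀ x ∈ U, Γ i k k x = -(Γ i k i x))
    (heg2 : ∀ i k l, i ≠ k → k ≠ l → i ≠ l → ∀ x ∈ U, Γ i k l x = 0)
    (X : VF n) (hX : ∀ i, ContDiffOn ℝ (⊤ : ℕ∞) (X i) U) :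
    (∀ i j k, ∀ x ∈ U,
        ∑ m, cdelta i j m x * nablaV Γ X k m x = ∑ m, cdelta i k m x * nablaV Γ X j m x)
      ↔ (∀ i k, i ≠ k → ∀ x ∈ U,
        pd (X i) k x = Γ i k i x * (X k x - X i x)) := by
  have hc : ∀ (i j : Fin n) (f : Fin n → ℝ) (x : Fin n → ℝ),
      ∑ m, cdelta i j m x * f m = if j = i then f i else 0 := by
    intro i j f x
    by_cases hji : j = i
    · subst hji
      simp [cdelta]
    · simp [cdelta, hji]
  have hsum : ∀ i k, i ≠ k → ∀ x ∈ U,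
      ∑ m, Γ i k m x * X m x = Γ i k i x * (X i x - X k x) := by
    intro i k hik x hx
    have key : ∀ m : Fin n, Γ i k m x * X m x =
        (if m = i then Γ i k i x * X i x else 0) +
        (if m = k then -(Γ i k i x * X k x) else 0) := by
      intro m
      by_cases h1 : m = i
      · subst h1
        simp [hik, Ne.symm hik]
      · by_cases h2 : m = k
        · subst h2
          rw [heg1 i m hik x hx]
          simp [h1]
        · rw [heg2 i k m hik (Ne.symm h2) (fun h => h1 h.symm) x hx]
          simp [h1, h2]
    rw [Finset.sum_congr rfl (fun m _ => key m), Finset.sum_add_distrib]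
    simp
    ring
  constructor
  · intro H i k hik x hx
    have h1 := H i i k x hx
    rw [hc, hc, if_pos rfl, if_neg (fun h => hik h.symm)] at h1
    rw [nablaV, hsum i k hik x hx] at h1
    linarith [h1]
  · intro H i j k x hx
    rw [hc, hc]
    by_cases hji : j = i <;> by_cases hki : k = i
    · subst hji; subst hki; simp
    · subst hji
      have h0 : nablaV Γ X k j x = 0 := by
        rw [nablaV, hsum j k (fun h => hki h.symm) x hx,
          H j k (fun h => hki h.symm) x hx]
        ring
      simp [hki, h0]
    · subst hki
      have h0 : nablaV Γ X j k x = 0 := by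
        rw [nablaV, hsum k j (fun h => hji h.symm) x hx,
          H k j (fun h => hji h.symm) x hx]
        ring
      simp [hji, h0]
    · simp [hji, hki]
end
end

section
/- Let Γ^i_{jk} be a torsionless connection on an open set U ⊆ ℝ^n satisfying Γ^i_{kk} = −Γ^i_{ki} for i ≠ k and Γ^i_{kl} = 0 for pairwise distinct i,k,l. Then the components of the curvature tensor with all four indices pairwise distinct vanish: R^n_{lmi} = 0 whenever n, l, m, i are pairwise distinct. -/
open scoped BigOperators

noncomputable section

theorem statement_15 {n : ℕ} (U : Set (Fin n → ℝ)) (hU : IsOpen U)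
    (Γ : SC n)
    (hΓ_smooth : ∀ i j k, ContDiffOn ℝ (⊤ : ℕ∞) (Γ i j k) U)
    (hΓ_tor : ∀ i j k, ∀ x ∈ U, Γ i j k x = Γ i k j x)
    (heg1 : ∀ i k, i ≠ k → ∀ x ∈ U, Γ i k k x = -(Γ i k i x))
    (heg2 : ∀ i k l, i ≠ k → k ≠ l → i ≠ l → ∀ x ∈ U, Γ i k l x = 0) :
    ∀ q l m i, q ≠ l → q ≠ m → q ≠ i → l ≠ m → l ≠ i → m ≠ i →
      ∀ x ∈ U, Riem Γ q l m i x = 0 := by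
  intro q l m i hql hqm hqi hlm hli hmi x hx
  have h0 : ∀ a b c : Fin n, a ≠ b → b ≠ c → a ≠ c → ∀ j, pd (Γ a b c) j x = 0 := by
    intro a b c hab hbc hac j
    have hev : Γ a b c =ᶠ[nhds x] fun _ => (0 : ℝ) :=
      Filter.eventuallyEq_of_mem (hU.mem_nhds hx) (fun y hy => heg2 a b c hab hbc hac y hy)
    unfold pd
    rw [Filter.EventuallyEq.fderiv_eq hev, fderiv_fun_const]
    simp
  have hsum : ∀ s : Fin n, Γ q m s x * Γ s i l x - Γ q i s x * Γ s m l x = 0 := by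
    intro s
    have h1 : Γ q m s x * Γ s i l x = 0 := by
      rcases eq_or_ne s q with rfl | hsq
      · rw [heg2 s i l hqi hli.symm hql x hx, mul_zero]
      · rcases eq_or_ne s m with rfl | hsm
        · rw [heg2 s i l hmi hli.symm hlm.symm x hx, mul_zero]
        · rw [heg2 q m s hqm hsm.symm hsq.symm x hx, zero_mul]
    have h2 : Γ q i s x * Γ s m l x = 0 := by
      rcases eq_or_ne s q with rfl | hsq
      · rw [heg2 s m l hqm hlm.symm hql x hx, mul_zero]
      · rcases eq_or_ne s i with rfl | hsi
        · rw [heg2 s m l hmi.symm hlm.symm hli.symm x hx, mul_zero]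
        · rw [heg2 q i s hqi hsi.symm hsq.symm x hx, zero_mul]
    rw [h1, h2, sub_zero]
  unfold Riem
  rw [h0 q i l hqi hli.symm hql m, h0 q m l hqm hlm.symm hql i,
    Finset.sum_eq_zero fun s _ => hsum s]
  ring
end
end

section
/- Let c^i_{jk} (i,j,k = 1,…,n) be real numbers symmetric in (j,k) and associative, i.e. c^i_{jm} c^m_{kl} = c^i_{km} c^m_{jl} (sum over repeated indices). Let X_α ∈ ℝ^n (α in a finite index set) and ε_α ∈ {+1,−1}, and define R^{sk}_{mi} = Σ_α ε_α (c^s_{ml} c^k_{iq} − c^s_{il} c^k_{mq}) X_α^l X_α^q. Then R^{sk}_{mi} c^n_{pk} + R^{sk}_{ip} c^n_{mk} + R^{sk}_{pm} c^n_{ik} = 0 for all indices s, n, m, i, p. -/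
/-!
Write `A = (c^s_{ml} Y^l)` for the matrix of multiplication by `Y`; the `α`-summand of `R^{sk}_{mi}`
is `A^s_m A^k_i - A^s_i A^k_m`. Associativity says exactly that `B_{xy} = c^p_{xk} A^k_y` is
symmetric in `x, y`, and the cyclic sum becomes
`A^s_m (B_{qi} - B_{iq}) + A^s_i (B_{mq} - B_{qm}) + A^s_q (B_{im} - B_{mi}) = 0`.
-/

open scoped BigOperators

open Finset

namespace StructureConstants

variable {ι 𝕜 : Type*} [Fintype ι] [CommRing 𝕜]

def mulLeft (c : ι → ι → ι → 𝕜) (Y : ι → 𝕜) (s m : ι) : 𝕜 := ∑ l, c s m l * Y l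

def curvature (c : ι → ι → ι → 𝕜) (Y : ι → 𝕜) (s k m i : ι) : 𝕜 :=
  mulLeft c Y s m * mulLeft c Y k i - mulLeft c Y s i * mulLeft c Y k m

variable {c : ι → ι → ι → 𝕜}

theorem sum_sum_sub_mul_mul_eq_curvature (Y : ι → 𝕜) (s k m i : ι) :
    ∑ l, ∑ q, (c s m l * c k i q - c s i l * c k m q) * Y l * Y q = curvature c Y s k m i := by
  simp only [curvature, mulLeft, sum_mul_sum, ← sum_sub_distrib]
  exact sum_congr rfl fun l _ => sum_congr rfl fun q _ => by ring

theorem sum_mul_mulLeft_comm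
    (hassoc : ∀ i j k l, ∑ m, c i j m * c m k l = ∑ m, c i k m * c m j l)
    (Y : ι → 𝕜) (p x y : ι) :
    ∑ k, c p x k * mulLeft c Y k y = ∑ k, c p y k * mulLeft c Y k x := by
  simp only [mulLeft, mul_sum]
  rw [sum_comm, sum_comm (s := univ) (t := univ) (f := fun k l => c p y k * (c k x l * Y l))]
  refine sum_congr rfl fun l _ => ?_
  simp only [← mul_assoc, ← sum_mul, hassoc p x y l]

theorem sum_curvature_mul_cyclic
    (hassoc : ∀ i j k l, ∑ m, c i j m * c m k l = ∑ m, c i k m * c m j l)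
    (Y : ι → 𝕜) (s p m i q : ι) :
    ∑ k, (curvature c Y s k m i * c p q k + curvature c Y s k i q * c p m k
      + curvature c Y s k q m * c p i k) = 0 := by
  set A := mulLeft c Y
  have hB := sum_mul_mulLeft_comm hassoc Y p
  calc _ = A s m * (∑ k, c p q k * A k i - ∑ k, c p i k * A k q)
        + A s i * (∑ k, c p m k * A k q - ∑ k, c p q k * A k m)
        + A s q * (∑ k, c p i k * A k m - ∑ k, c p m k * A k i) := by
        simp only [curvature, mul_sub, mul_sum, ← sum_sub_distrib, ← sum_add_distrib]
        exact sum_congr rfl fun k _ => by ring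
    _ = 0 := by rw [hB q i, hB m q, hB i m]; ring

end StructureConstants

open StructureConstants in
theorem statement_17_general {n : ℕ} {α : Type*} [Fintype α]
    (c : Fin n → Fin n → Fin n → ℝ)
    (hassoc : ∀ i j k l, ∑ m, c i j m * c m k l = ∑ m, c i k m * c m j l)
    (X : α → Fin n → ℝ) (ε : α → ℝ)
    (R : Fin n → Fin n → Fin n → Fin n → ℝ)
    (hR : ∀ s k m i, R s k m i =
      ∑ a : α, ε a * ∑ l, ∑ q, (c s m l * c k i q - c s i l * c k m q) * X a l * X a q) :
    ∀ s p m i q,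
      ∑ k, (R s k m i * c p q k + R s k i q * c p m k + R s k q m * c p i k) = 0 := by
  intro s p m i q
  simp only [hR, sum_sum_sub_mul_mul_eq_curvature, sum_mul, ← sum_add_distrib]
  rw [sum_comm]
  refine sum_eq_zero fun a _ => ?_
  simp only [mul_assoc, ← mul_add, ← mul_sum, sum_curvature_mul_cyclic hassoc, mul_zero]

theorem statement_17 {n : ℕ} {α : Type*} [Fintype α]
    (c : Fin n → Fin n → Fin n → ℝ)
    (hcomm : ∀ i j k, c i j k = c i k j)
    (hassoc : ∀ i j k l, ∑ m, c i j m * c m k l = ∑ m, c i k m * c m j l)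
    (X : α → Fin n → ℝ) (ε : α → ℝ) (hε : ∀ a, ε a = 1 ∨ ε a = -1)
    (R : Fin n → Fin n → Fin n → Fin n → ℝ)
    (hR : ∀ s k m i, R s k m i =
      ∑ a : α, ε a * ∑ l, ∑ q, (c s m l * c k i q - c s i l * c k m q) * X a l * X a q) :
    ∀ s p m i q,
      ∑ k, (R s k m i * c p q k + R s k i q * c p m k + R s k q m * c p i k) = 0 :=
  statement_17_general c hassoc X ε R hR
end

section
/- Let g be a smooth diagonal metric on an open set U ⊆ ℝ^n, g_{ij} = δ_{ij} g_{ii} with each g_{ii} nowhere vanishing, and let Γ^i_{jk} be its Levi-Civita connection. If Γ satisfies the symmetry condition ∇_l c^i_{jk} = ∇_j c^i_{lk} for the canonical structure functions c^i_{jk} = δ^i_j δ^i_k, then ∂_i g_{kk} = ∂_k g_{ii} for all i, k; that is, g is an Egorov (potential) metric. -/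
open scoped BigOperators

noncomputable section

theorem statement_19 {n : ℕ} (U : Set (Fin n → ℝ)) (hU : IsOpen U)
    (h : Fin n → (Fin n → ℝ) → ℝ)
    (hh_smooth : ∀ i, ContDiffOn ℝ (⊤ : ℕ∞) (h i) U)
    (hh_ne : ∀ i, ∀ x ∈ U, h i x ≠ 0)
    (g : Fin n → Fin n → (Fin n → ℝ) → ℝ)
    (hg : ∀ i j x, g i j x = if i = j then h i x else 0)
    (Γ : SC n)
    (hΓ : ∀ i j k x, Γ i j k x =
      (1 / 2) * ∑ s, (if i = s then (h i x)⁻¹ else 0) *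
        (pd (g s k) j x + pd (g s j) k x - pd (g j k) s x))
    (hsym : ∀ i j k l, ∀ x ∈ U,
      nablaC Γ cdelta l i j k x = nablaC Γ cdelta j i l k x) :
    ∀ i k, ∀ x ∈ U, pd (h k) i x = pd (h i) k x := by
  intro i k x hx
  rcases eq_or_ne i k with rfl | hik
  · rfl
  have hki : k ≠ i := hik.symm
  have gik : g i k = fun _ => 0 := funext fun y => by rw [hg]; simp [hik]
  have gii : g i i = h i := funext fun y => by rw [hg]; simp
  have gkk : g k k = h k := funext fun y => by rw [hg]; simp
  have pdc : ∀ (a b c d : Fin n), pd (cdelta a b c) d x = 0 := by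
    intro a b c d
    have e : cdelta a b c = fun _ : Fin n → ℝ => if b = a ∧ c = a then (1:ℝ) else 0 := rfl
    rw [pd, e, fderiv_fun_const]
    simp
  have key := hsym i k k i x hx
  unfold nablaC at key
  rw [pdc, pdc] at key
  simp only [cdelta, hki, and_self, and_false, false_and, if_false,
    mul_zero, mul_ite, mul_one, sub_zero, zero_sub, zero_add,
    Finset.sum_ite_eq, Finset.mem_univ, if_true, ite_and, eq_self_iff_true,
    Finset.sum_sub_distrib, Finset.sum_ite_eq', Finset.sum_neg_distrib] at key
  -- key should now be : Γ i i k x = - Γ i k k x (or similar)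
  rw [hΓ, hΓ] at key
  simp only [ite_mul, zero_mul, Finset.sum_ite_eq, Finset.mem_univ, if_true] at key
  rw [gik, gii, gkk] at key
  have hpd0 : pd (fun _ : Fin n → ℝ => (0:ℝ)) = fun _ _ => 0 := by
    funext a b; simp [pd]
  rw [hpd0] at key
  have hne := hh_ne i x hx
  field_simp at key
  linarith
end
end
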